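/- Let K be an n×n positive semi-definite matrix, σ² > 0, y, b ∈ ℝⁿ. Define the primal objective L(α) = (1/2)‖b − Kα‖² + (σ²/2) αᵀ K α and the dual objective L*(α) = (1/2) αᵀ(K + σ²I)α − αᵀ b. Then min_α L(α) = −σ² · min_α L*(α), and α* = (K + σ²I)⁻¹ b minimises both L and L*. -/

import Mathlib

/-!
With `M = K + σ²I` positive definite and `M α* = b`, both objectives are quadratics
`½ αᵀAα − αᵀc` (up to a constant) with a positive semidefinite `A` and `A α* = c`: for `L*`
take `A = M`, `c = b`; expanding the square in `L` gives `A = KM`, `c = Kb`. Such a quadratic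
exceeds its value at `α*` by `½ (α − α*)ᵀA(α − α*) ≥ 0`. At the optimum `b − Kα* = σ²α*`, so
`L(α*) = (σ²/2) α*ᵀb` while `L*(α*) = −½ α*ᵀb`.
-/

open Matrix

variable {ι : Type*}

theorem Matrix.IsSymm.dotProduct_mulVec_comm {R : Type*} [CommSemiring R] [Fintype ι]
    {A : Matrix ι ι R} (hA : A.IsSymm) (x y : ι → R) : x ⬝ᵥ A *ᵥ y = y ⬝ᵥ A *ᵥ x := by
  rw [dotProduct_mulVec, ← vecMul_transpose, hA.eq, dotProduct_comm]

theorem Matrix.IsSymm.half_dotProduct_mulVec_sub_eq {R : Type*} [Field R] [NeZero (2 : R)]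
    [Fintype ι] {A : Matrix ι ι R} (hA : A.IsSymm) {x₀ c : ι → R} (hx₀ : A *ᵥ x₀ = c)
    (x : ι → R) :
    1 / 2 * (x ⬝ᵥ A *ᵥ x) - x ⬝ᵥ c
      = (1 / 2 * (x₀ ⬝ᵥ A *ᵥ x₀) - x₀ ⬝ᵥ c) + 1 / 2 * ((x - x₀) ⬝ᵥ A *ᵥ (x - x₀)) := by
  have hcross : x₀ ⬝ᵥ A *ᵥ x = x ⬝ᵥ c := by rw [hA.dotProduct_mulVec_comm, hx₀]
  have h2 : (2 : R) ≠ 0 := two_ne_zero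
  simp only [mulVec_sub, sub_dotProduct, dotProduct_sub, hx₀, hcross]
  field_simp
  ring

theorem Matrix.PosSemidef.half_dotProduct_mulVec_sub_le [Fintype ι] {A : Matrix ι ι ℝ}
    (hA : A.PosSemidef) {x₀ c : ι → ℝ} (hx₀ : A *ᵥ x₀ = c) (x : ι → ℝ) :
    1 / 2 * (x₀ ⬝ᵥ A *ᵥ x₀) - x₀ ⬝ᵥ c ≤ 1 / 2 * (x ⬝ᵥ A *ᵥ x) - x ⬝ᵥ c := by
  rw [(isHermitian_iff_isSymm.mp hA.isHermitian).half_dotProduct_mulVec_sub_eq hx₀ x]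
  have hquad := hA.dotProduct_mulVec_nonneg (x - x₀)
  rw [star_trivial] at hquad
  linarith

theorem Matrix.IsSymm.half_residual_add_eq {R : Type*} [Field R] [NeZero (2 : R)] [Fintype ι]
    [DecidableEq ι] {K : Matrix ι ι R} (hK : K.IsSymm) (s : R) (b α : ι → R) :
    1 / 2 * ((b - K *ᵥ α) ⬝ᵥ (b - K *ᵥ α)) + s / 2 * (α ⬝ᵥ K *ᵥ α)
      = 1 / 2 * (b ⬝ᵥ b) + (1 / 2 * (α ⬝ᵥ (K * (K + s • 1)) *ᵥ α) - α ⬝ᵥ K *ᵥ b) := by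
  have hsq : α ⬝ᵥ K *ᵥ (K *ᵥ α) = K *ᵥ α ⬝ᵥ K *ᵥ α := hK.dotProduct_mulVec_comm _ _
  have hcross : b ⬝ᵥ K *ᵥ α = α ⬝ᵥ K *ᵥ b := hK.dotProduct_mulVec_comm _ _
  have h2 : (2 : R) ≠ 0 := two_ne_zero
  simp only [mul_add, Matrix.mul_smul, mul_one, add_mulVec, smul_mulVec, ← mulVec_mulVec,
    dotProduct_add, dotProduct_smul, smul_eq_mul, sub_dotProduct, dotProduct_sub, hsq, hcross,
    dotProduct_comm (K *ᵥ α) b]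
  field_simp
  ring

theorem Matrix.PosSemidef.mul_add_smul_one [Fintype ι] [DecidableEq ι] {K : Matrix ι ι ℝ}
    (hK : K.PosSemidef) {s : ℝ} (hs : 0 ≤ s) : (K * (K + s • 1)).PosSemidef := by
  rw [mul_add, Matrix.mul_smul, mul_one]
  refine .add ?_ (hK.smul hs)
  simpa only [hK.isHermitian.eq] using posSemidef_conjTranspose_mul_self K

theorem Matrix.PosSemidef.add_smul_one_posDef [DecidableEq ι] {K : Matrix ι ι ℝ}
    (hK : K.PosSemidef) {s : ℝ} (hs : 0 < s) : (K + s • 1).PosDef :=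
  PosDef.posSemidef_add hK (PosDef.one.smul hs)

/-- Strong duality between the primal objective `L` and the dual objective `L*`:
`min L = −σ² min L*`, and `α* = (K + σ²I)⁻¹ b` minimises both. -/
theorem stmt2 (n : ℕ) (K : Matrix (Fin n) (Fin n) ℝ) (hK : K.PosSemidef)
    (σ2 : ℝ) (hσ : 0 < σ2) (b : Fin n → ℝ)
    (L Lstar : (Fin n → ℝ) → ℝ)
    (hL : ∀ α, L α = (1/2) * ((b - K.mulVec α) ⬝ᵥ (b - K.mulVec α))
        + (σ2/2) * (α ⬝ᵥ K.mulVec α))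
    (hLstar : ∀ α, Lstar α = (1/2) * (α ⬝ᵥ (K + σ2 • 1).mulVec α) - α ⬝ᵥ b)
    (αstar : Fin n → ℝ) (hα : αstar = (K + σ2 • 1)⁻¹.mulVec b) :
    (∀ α, L αstar ≤ L α) ∧ (∀ α, Lstar αstar ≤ Lstar α) ∧
    L αstar = -σ2 * Lstar αstar := by
  have hM := hK.add_smul_one_posDef hσ
  have hMα : (K + σ2 • 1) *ᵥ αstar = b := by
    rw [hα, mulVec_mulVec, mul_nonsing_inv _ hM.det_pos.ne'.isUnit, one_mulVec]
  have hKMα : (K * (K + σ2 • 1)) *ᵥ αstar = K *ᵥ b := by rw [← mulVec_mulVec, hMα]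
  have hresidual : b - K *ᵥ αstar = σ2 • αstar := by
    rw [← hMα, add_mulVec, smul_mulVec, one_mulVec, add_sub_cancel_left]
  have hKsymm := isHermitian_iff_isSymm.mp hK.isHermitian
  refine ⟨fun α => ?_, fun α => ?_, ?_⟩
  · simp only [hL, hKsymm.half_residual_add_eq]
    gcongr 1 / 2 * (b ⬝ᵥ b) + ?_
    exact (hK.mul_add_smul_one hσ.le).half_dotProduct_mulVec_sub_le hKMα α
  · simpa only [hLstar] using hM.posSemidef.half_dotProduct_mulVec_sub_le hMα α
  · have hKα : αstar ⬝ᵥ K *ᵥ αstar = αstar ⬝ᵥ b - σ2 * (αstar ⬝ᵥ αstar) := by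
      rw [← hMα, add_mulVec, smul_mulVec, one_mulVec, dotProduct_add, dotProduct_smul,
        smul_eq_mul]
      ring
    rw [hL, hLstar, hMα, hresidual, hKα, smul_dotProduct, dotProduct_smul, smul_eq_mul,
      smul_eq_mul]
    ring
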